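/- arXiv:2101.04292 — 2 statements merged into one kernel-verified Lean document; each statement's English description precedes it below -/
import Mathlib

section
/- Let X, X̃ ∈ 𝕆^{n×k} and set α = tr(XᵀAX), δ = tr(XᵀD), β = tr(XᵀBX), β̃ = tr(X̃ᵀBX̃). If tr(X̃ᵀ E(X) X̃) ≥ tr(Xᵀ E(X) X), then f_θ(X) + γ ≤ g_θ(X̃) + tr(X̃ᵀ D Xᵀ X̃)/(tr(X̃ᵀBX̃))^θ, where γ = ((α + δ)/(β̃^θ β))·[(1−θ)β + θβ̃ − β^{1−θ} β̃^θ]. Moreover, if the hypothesis inequality tr(X̃ᵀ E(X) X̃) ≥ tr(Xᵀ E(X) X) is strict, then the conclusion inequality is strict. -/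
/-!
Write `β = tr(XᵀBX)`, `β̃ = tr(X̃ᵀBX̃)` and `E = E(X)`. Expanding the traces, and using `XᵀX = I`
to get `tr(XᵀDXᵀX) = tr(XᵀD)`, gives `tr(XᵀEX) = (2/β^θ)(1 − θ)(α + δ)` and
`tr(X̃ᵀEX̃) = (2/β^θ)(tr(X̃ᵀAX̃) + tr(X̃ᵀDXᵀX̃) − θ f₁(X) β̃)`. The correction `γ` is exactly what
turns `f_θ(X)` into `((1 − θ)(α + δ) + θ f₁(X) β̃)/β̃^θ`, so the difference of the two sides of the
conclusion is the positive multiple `β^θ/(2β̃^θ)` of `tr(X̃ᵀEX̃) − tr(XᵀEX)`.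
-/

open Matrix

noncomputable section

/-- `f_θ(X) = tr(XᵀAX + XᵀD) / (tr(XᵀBX))^θ`. -/
def fTheta {n k : ℕ} (A B : Matrix (Fin n) (Fin n) ℝ) (D : Matrix (Fin n) (Fin k) ℝ)
    (θ : ℝ) (X : Matrix (Fin n) (Fin k) ℝ) : ℝ :=
  (trace (Xᵀ * A * X) + trace (Xᵀ * D)) / trace (Xᵀ * B * X) ^ θ

/-- `g_θ(X) = tr(XᵀAX) / (tr(XᵀBX))^θ`. -/
def gTheta {n k : ℕ} (A B : Matrix (Fin n) (Fin n) ℝ) (θ : ℝ)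
    (X : Matrix (Fin n) (Fin k) ℝ) : ℝ :=
  trace (Xᵀ * A * X) / trace (Xᵀ * B * X) ^ θ

/-- `f₁(X) = tr(XᵀAX + XᵀD) / tr(XᵀBX)`. -/
def f1 {n k : ℕ} (A B : Matrix (Fin n) (Fin n) ℝ) (D : Matrix (Fin n) (Fin k) ℝ)
    (X : Matrix (Fin n) (Fin k) ℝ) : ℝ :=
  (trace (Xᵀ * A * X) + trace (Xᵀ * D)) / trace (Xᵀ * B * X)

/-- `E(X) = (2/(tr(XᵀBX))^θ) · [A + (DXᵀ + XDᵀ)/2 − θ f₁(X) B]`. -/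
def Emat {n k : ℕ} (A B : Matrix (Fin n) (Fin n) ℝ) (D : Matrix (Fin n) (Fin k) ℝ)
    (θ : ℝ) (X : Matrix (Fin n) (Fin k) ℝ) : Matrix (Fin n) (Fin n) ℝ :=
  (2 / trace (Xᵀ * B * X) ^ θ) •
    (A + (2⁻¹ : ℝ) • (D * Xᵀ + X * Dᵀ) - (θ * f1 A B D X) • B)

namespace Matrix

theorem rank_eq_card_of_transpose_mul_self_eq_one {m n : Type*} [Fintype m] [Fintype n]
    [DecidableEq n] {X : Matrix m n ℝ} (hX : Xᵀ * X = 1) : X.rank = Fintype.card n := by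
  rw [← rank_transpose_mul_self, hX, rank_one]

theorem PosSemidef.trace_transpose_mul_mul_pos {m n : Type*} [Fintype m] [Fintype n]
    [DecidableEq n] {B : Matrix n n ℝ} (hB : B.PosSemidef) {X : Matrix n m ℝ}
    (hrank : Fintype.card n - X.rank < B.rank) : 0 < trace (Xᵀ * B * X) := by
  obtain ⟨C, rfl⟩ : ∃ C : Matrix n n ℝ, B = star C * C := by
    open scoped MatrixOrder in
    exact CStarAlgebra.nonneg_iff_eq_star_mul_self.mp hB.nonneg
  have hCt : star C = Cᵀ := conjTranspose_eq_transpose_of_trivial C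
  have hCX : Xᵀ * (star C * C) * X = (C * X)ᴴ * (C * X) := by
    rw [conjTranspose_eq_transpose_of_trivial, hCt, transpose_mul, Matrix.mul_assoc,
      Matrix.mul_assoc, Matrix.mul_assoc]
  rw [hCX]
  refine (posSemidef_conjTranspose_mul_self _).trace_nonneg.lt_of_ne' fun h ↦ ?_
  -- `C * X = 0` would force `rank C + rank X ≤ n`, while `rank C = rank B`.
  have hle := rank_add_rank_le_card_of_mul_eq_zero (trace_conjTranspose_mul_self_eq_zero_iff.mp h)
  rw [hCt, rank_transpose_mul_self] at hrank
  omega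

end Matrix

theorem trace_transpose_mul_Emat_mul {n k : ℕ} (A B : Matrix (Fin n) (Fin n) ℝ)
    (D : Matrix (Fin n) (Fin k) ℝ) (θ : ℝ) (X Y : Matrix (Fin n) (Fin k) ℝ) :
    trace (Yᵀ * Emat A B D θ X * Y)
      = 2 / trace (Xᵀ * B * X) ^ θ * (trace (Yᵀ * A * Y) + trace (Yᵀ * D * Xᵀ * Y)
          - θ * f1 A B D X * trace (Yᵀ * B * Y)) := by
  have hsymm : trace (Yᵀ * X * Dᵀ * Y) = trace (Yᵀ * D * Xᵀ * Y) := by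
    rw [← trace_transpose]
    simp only [transpose_mul, transpose_transpose, Matrix.mul_assoc]
  simp only [Emat, Matrix.mul_smul, Matrix.smul_mul, Matrix.mul_add, Matrix.add_mul,
    Matrix.sub_mul, Matrix.mul_sub, trace_smul, trace_add, trace_sub, smul_eq_mul, hsymm,
    ← Matrix.mul_assoc]
  ring

def gammaTheta {n k : ℕ} (A B : Matrix (Fin n) (Fin n) ℝ) (D : Matrix (Fin n) (Fin k) ℝ)
    (θ : ℝ) (X Xt : Matrix (Fin n) (Fin k) ℝ) : ℝ :=
  (trace (Xᵀ * A * X) + trace (Xᵀ * D)) / (trace (Xtᵀ * B * Xt) ^ θ * trace (Xᵀ * B * X))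
    * ((1 - θ) * trace (Xᵀ * B * X) + θ * trace (Xtᵀ * B * Xt)
      - trace (Xᵀ * B * X) ^ (1 - θ) * trace (Xtᵀ * B * Xt) ^ θ)

theorem sub_fTheta_add_gammaTheta_eq {n k : ℕ} (A B : Matrix (Fin n) (Fin n) ℝ)
    (D : Matrix (Fin n) (Fin k) ℝ) (θ : ℝ) {X Xt : Matrix (Fin n) (Fin k) ℝ} (hX : Xᵀ * X = 1)
    (hβ : 0 < trace (Xᵀ * B * X)) (hβt : 0 < trace (Xtᵀ * B * Xt)) :
    gTheta A B θ Xt + trace (Xtᵀ * D * Xᵀ * Xt) / trace (Xtᵀ * B * Xt) ^ θ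
        - (fTheta A B D θ X + gammaTheta A B D θ X Xt)
      = trace (Xᵀ * B * X) ^ θ / (2 * trace (Xtᵀ * B * Xt) ^ θ)
        * (trace (Xtᵀ * Emat A B D θ X * Xt) - trace (Xᵀ * Emat A B D θ X * X)) := by
  have hDX : trace (Xᵀ * D * Xᵀ * X) = trace (Xᵀ * D) := by
    rw [Matrix.mul_assoc, hX, Matrix.mul_one]
  have hpow : trace (Xᵀ * B * X) ^ (1 - θ) = trace (Xᵀ * B * X) / trace (Xᵀ * B * X) ^ θ := by
    rw [Real.rpow_sub hβ, Real.rpow_one]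
  have := (Real.rpow_pos_of_pos hβ θ).ne'
  have := (Real.rpow_pos_of_pos hβt θ).ne'
  rw [trace_transpose_mul_Emat_mul, trace_transpose_mul_Emat_mul, hDX]
  simp only [gTheta, fTheta, gammaTheta, f1, hpow]
  field_simp
  ring

theorem stmt1_general {n k : ℕ}
    (A B : Matrix (Fin n) (Fin n) ℝ) (hB : B.PosSemidef)
    (hrank : n - k < B.rank)
    (D : Matrix (Fin n) (Fin k) ℝ) (θ : ℝ)
    (X Xt : Matrix (Fin n) (Fin k) ℝ) (hX : Xᵀ * X = 1) (hXt : Xtᵀ * Xt = 1)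
    (α δ β βt γ : ℝ)
    (hα : α = trace (Xᵀ * A * X)) (hδ : δ = trace (Xᵀ * D))
    (hβ : β = trace (Xᵀ * B * X)) (hβt : βt = trace (Xtᵀ * B * Xt))
    (hγ : γ = (α + δ) / (βt ^ θ * β) * ((1 - θ) * β + θ * βt - β ^ (1 - θ) * βt ^ θ))
    (htr : trace (Xᵀ * Emat A B D θ X * X) ≤ trace (Xtᵀ * Emat A B D θ X * Xt)) :
    fTheta A B D θ X + γ
        ≤ gTheta A B θ Xt + trace (Xtᵀ * D * Xᵀ * Xt) / trace (Xtᵀ * B * Xt) ^ θ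
      ∧ (trace (Xᵀ * Emat A B D θ X * X) < trace (Xtᵀ * Emat A B D θ X * Xt) →
          fTheta A B D θ X + γ
            < gTheta A B θ Xt + trace (Xtᵀ * D * Xᵀ * Xt) / trace (Xtᵀ * B * Xt) ^ θ) := by
  have trace_pos {Y : Matrix (Fin n) (Fin k) ℝ} (hY : Yᵀ * Y = 1) : 0 < trace (Yᵀ * B * Y) :=
    hB.trace_transpose_mul_mul_pos (by simpa [rank_eq_card_of_transpose_mul_self_eq_one hY])
  have hγ' : γ = gammaTheta A B D θ X Xt := by subst hα hδ hβ hβt hγ; rfl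
  have hβpos := trace_pos hX
  have hβtpos := trace_pos hXt
  have hdiff := sub_fTheta_add_gammaTheta_eq A B D θ hX hβpos hβtpos
  have hc : 0 < trace (Xᵀ * B * X) ^ θ / (2 * trace (Xtᵀ * B * Xt) ^ θ) := by positivity
  rw [hγ']
  refine ⟨sub_nonneg.mp ?_, fun hlt ↦ sub_pos.mp ?_⟩
  · rw [hdiff]
    exact mul_nonneg hc.le (sub_nonneg.mpr htr)
  · rw [hdiff]
    exact mul_pos hc (sub_pos.mpr hlt)

/-- Lemma 2.3: if `tr(X̃ᵀE(X)X̃) ≥ tr(XᵀE(X)X)` then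
`f_θ(X) + γ ≤ g_θ(X̃) + tr(X̃ᵀDXᵀX̃)/(tr(X̃ᵀBX̃))^θ`, with strictness carrying over. -/
theorem stmt1 {n k : ℕ} (hk : 1 ≤ k) (hkn : k < n)
    (A B : Matrix (Fin n) (Fin n) ℝ) (hA : A.IsSymm) (hB : B.PosSemidef)
    (hrank : n - k < B.rank)
    (D : Matrix (Fin n) (Fin k) ℝ) (θ : ℝ) (hθ0 : 0 ≤ θ) (hθ1 : θ ≤ 1)
    (X Xt : Matrix (Fin n) (Fin k) ℝ) (hX : Xᵀ * X = 1) (hXt : Xtᵀ * Xt = 1)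
    (α δ β βt γ : ℝ)
    (hα : α = trace (Xᵀ * A * X)) (hδ : δ = trace (Xᵀ * D))
    (hβ : β = trace (Xᵀ * B * X)) (hβt : βt = trace (Xtᵀ * B * Xt))
    (hγ : γ = (α + δ) / (βt ^ θ * β) * ((1 - θ) * β + θ * βt - β ^ (1 - θ) * βt ^ θ))
    (htr : trace (Xᵀ * Emat A B D θ X * X) ≤ trace (Xtᵀ * Emat A B D θ X * Xt)) :
    fTheta A B D θ X + γ
        ≤ gTheta A B θ Xt + trace (Xtᵀ * D * Xᵀ * Xt) / trace (Xtᵀ * B * Xt) ^ θ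
      ∧ (trace (Xᵀ * Emat A B D θ X * X) < trace (Xtᵀ * Emat A B D θ X * Xt) →
          fTheta A B D θ X + γ
            < gTheta A B θ Xt + trace (Xtᵀ * D * Xᵀ * Xt) / trace (Xtᵀ * B * Xt) ^ θ) :=
  stmt1_general A B hB hrank D θ X Xt hX hXt α δ β βt γ hα hδ hβ hβt hγ htr
end
end

section
/- Let E ∈ ℝ^{n×n} be symmetric with eigenvalues λ₁ ≥ ⋯ ≥ λ_n and suppose the eigenvalue gap λ_k − λ_{k+1} > 0. Then: (i) any two matrices X̂, Ŷ ∈ 𝕆^{n×k} that are orthonormal basis matrices of the invariant subspace of E associated with the k largest eigenvalues (i.e. E·X̂ = X̂·(X̂ᵀEX̂) with tr(X̂ᵀEX̂) = λ₁ + ⋯ + λ_k, and likewise for Ŷ) satisfy Ŷ = X̂Q for some Q ∈ 𝕆^{k×k}; (ii) if additionally rank(DᵀX̂) = k for D ∈ ℝ^{n×k}, then the post-processed matrix X̂UVᵀ, where X̂ᵀD = UΣVᵀ is a singular value decomposition, is uniquely determined: for any such X̂, Ŷ and any SVDs X̂ᵀD = UΣVᵀ and ŶᵀD = U'Σ'V'ᵀ,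 one has X̂UVᵀ = ŶU'V'ᵀ. -/
/-!
Write `M = PᵀX̂`. The weights `w i = (M Mᵀ) i i` lie in `[0, 1]`, sum to `k`, and
`tr (X̂ᵀ E X̂) = ∑ μ i * w i`. Because of the gap, a threshold `t` separates the top `k` eigenvalues
from the others, and `∑ (𝟙_top i - w i) (μ i - t)` is a sum of nonnegative terms that vanishes when
the trace is maximal; so `w` is the indicator of the top `k` indices. A symmetric idempotent
with `0/1` diagonal is diagonal, hence `X̂ X̂ᵀ` is the spectral projection `P 𝟙_top Pᵀ`, the same
for `Ŷ`, and `Ŷ = X̂ (X̂ᵀŶ)`.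

For (ii), `U Σ Vᵀ = (U Vᵀ) (V Σ Vᵀ)` is a polar decomposition: its positive semidefinite factor is
the square root of `(X̂ᵀD)ᵀ(X̂ᵀD)`, so it is unique, and when `X̂ᵀD` is invertible so is the
orthogonal factor `U Vᵀ`.
-/

open Matrix Finset

theorem eq_indicator_of_sum_mul_eq_sum {ι : Type*} [Fintype ι] [DecidableEq ι] (S : Finset ι)
    {μ w : ι → ℝ} {t : ℝ} (hS : ∀ i ∈ S, t < μ i) (hSc : ∀ i ∉ S, μ i < t)
    (hw0 : ∀ i, 0 ≤ w i) (hw1 : ∀ i, w i ≤ 1) (hw : ∑ i, w i = #S)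
    (h : ∑ i, μ i * w i = ∑ i ∈ S, μ i) (i : ι) :
    w i = if i ∈ S then 1 else 0 := by
  set e : ι → ℝ := fun i => if i ∈ S then 1 else 0
  have hterm : ∀ i, 0 ≤ (e i - w i) * (μ i - t) := by
    intro i
    by_cases hi : i ∈ S
    · simp only [e, if_pos hi]
      nlinarith [hS i hi, hw1 i]
    · simp only [e, if_neg hi]
      nlinarith [hSc i hi, hw0 i]
  have hsum : ∑ i, (e i - w i) * (μ i - t) = 0 := by
    calc ∑ i, (e i - w i) * (μ i - t)
        = (∑ i ∈ S, μ i - ∑ i, μ i * w i) - t * (#S - ∑ i, w i) := by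
          simp only [e, sub_mul, ite_mul, one_mul, zero_mul, sum_sub_distrib,
            sum_ite_mem, univ_inter, sum_const, nsmul_eq_mul, mul_sub, mul_sum, mul_comm (w _)]
          ring
      _ = 0 := by rw [h, hw]; ring
  have hi := (sum_eq_zero_iff_of_nonneg fun i _ => hterm i).mp hsum i (mem_univ i)
  rcases mul_eq_zero.mp hi with hi | hi
  · exact (sub_eq_zero.mp hi).symm
  · by_cases hiS : i ∈ S
    · linarith [hS i hiS]
    · linarith [hSc i hiS]

theorem Fin.sum_univ_castLE_eq_sum_Iio {M : Type*} [AddCommMonoid M] {k n : ℕ} (hkn : k < n)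
    (f : Fin n → M) : ∑ i : Fin k, f (Fin.castLE hkn.le i) = ∑ i ∈ Iio ⟨k, hkn⟩, f i := by
  have hmap : univ.map (Fin.castLEEmb hkn.le) = Iio ⟨k, hkn⟩ := by
    ext i
    simp only [mem_map, mem_univ, true_and, Fin.coe_castLEEmb, mem_Iio, Fin.lt_def]
    exact ⟨fun ⟨a, ha⟩ => ha ▸ a.isLt, fun hi => ⟨⟨i, hi⟩, rfl⟩⟩
  rw [← hmap, sum_map]
  rfl

theorem Antitone.exists_separating_Iio {β : Type*} [LinearOrder β] [DenselyOrdered β] {n k : ℕ}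
    {μ : Fin n → β} (hμ : Antitone μ) (hkn : k < n)
    (hgap : μ ⟨k, hkn⟩ < μ ⟨k - 1, (k.sub_le 1).trans_lt hkn⟩) :
    ∃ t, (∀ i ∈ Iio ⟨k, hkn⟩, t < μ i) ∧ ∀ i ∉ Iio ⟨k, hkn⟩, μ i < t := by
  obtain ⟨t, hkt, htk⟩ := exists_between hgap
  refine ⟨t, fun i hi => htk.trans_le (hμ ?_), fun i hi => (hμ ?_).trans_lt hkt⟩
  · simp only [mem_Iio, Fin.lt_def, Fin.le_def] at hi ⊢
    omega
  · simpa using hi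

namespace Matrix

lemma isUnit_of_rank_eq_card {K m : Type*} [Field K] [Fintype m] [DecidableEq m]
    {A : Matrix m m K} (h : A.rank = Fintype.card m) : IsUnit A := by
  rw [← mulVec_surjective_iff_isUnit]
  have hrange : LinearMap.range A.mulVecLin = ⊤ :=
    Submodule.eq_top_of_finrank_eq (by simpa [rank] using h)
  exact LinearMap.range_eq_top.mp hrange

variable {ι κ : Type*} [Fintype ι] [Fintype κ]

lemma isIdempotentElem_mul_transpose [DecidableEq κ] {M : Matrix ι κ ℝ} (hM : Mᵀ * M = 1) :
    IsIdempotentElem (M * Mᵀ) := by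
  rw [IsIdempotentElem, Matrix.mul_assoc, ← Matrix.mul_assoc Mᵀ, hM, Matrix.one_mul]

lemma trace_mul_transpose_of_transpose_mul_eq_one [DecidableEq κ] {M : Matrix ι κ ℝ}
    (hM : Mᵀ * M = 1) : trace (M * Mᵀ) = Fintype.card κ := by
  rw [trace_mul_comm, hM, trace_one]

lemma trace_transpose_mul_diagonal_mul [DecidableEq ι] (M : Matrix ι κ ℝ) (μ : ι → ℝ) :
    trace (Mᵀ * diagonal μ * M) = ∑ i, μ i * (M * Mᵀ) i i := by
  rw [trace_mul_comm, ← Matrix.mul_assoc]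
  simp [trace, mul_comm]

namespace IsSymm

variable {G : Matrix ι ι ℝ}

lemma apply_self_eq_sum_sq (hG : G.IsSymm) (hGG : IsIdempotentElem G) (i : ι) :
    G i i = ∑ j, G i j ^ 2 := by
  conv_lhs => rw [← hGG.eq]
  simp only [mul_apply, sq, hG.apply]

lemma apply_self_mem_Icc (hG : G.IsSymm) (hGG : IsIdempotentElem G) (i : ι) :
    G i i ∈ Set.Icc 0 1 := by
  have hsum := hG.apply_self_eq_sum_sq hGG i
  have hle : G i i ^ 2 ≤ G i i :=
    hsum ▸ single_le_sum (f := fun j => G i j ^ 2) (fun j _ => sq_nonneg _) (mem_univ i)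
  have hnonneg : 0 ≤ G i i := hsum ▸ sum_nonneg fun j _ => sq_nonneg _
  exact ⟨hnonneg, by nlinarith⟩

lemma eq_diagonal_diag [DecidableEq ι] (hG : G.IsSymm) (hGG : IsIdempotentElem G)
    (hdiag : ∀ i, G i i ^ 2 = G i i) : G = diagonal G.diag := by
  ext i j
  by_cases hij : i = j
  · subst hij; simp
  · have hsum := hG.apply_self_eq_sum_sq hGG i
    rw [← add_sum_erase _ _ (mem_univ i), hdiag, left_eq_add] at hsum
    have hj := (sum_eq_zero_iff_of_nonneg fun l _ => sq_nonneg (G i l)).mp hsum j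
      (mem_erase.mpr ⟨Ne.symm hij, mem_univ j⟩)
    simpa [diagonal_apply_ne _ hij] using hj

end IsSymm

theorem mul_transpose_eq_of_trace_eq_sum [DecidableEq ι] [DecidableEq κ] {P : Matrix ι ι ℝ}
    (hP : Pᵀ * P = 1) {μ : ι → ℝ} (S : Finset ι) {t : ℝ} (hS : ∀ i ∈ S, t < μ i)
    (hSc : ∀ i ∉ S, μ i < t) {Z : Matrix ι κ ℝ} (hZ : Zᵀ * Z = 1) (hcard : Fintype.card κ = #S)
    (htr : trace (Zᵀ * (P * diagonal μ * Pᵀ) * Z) = ∑ i ∈ S, μ i) :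
    Z * Zᵀ = P * diagonal (fun i => if i ∈ S then 1 else 0) * Pᵀ := by
  have hPPt : P * Pᵀ = 1 := mul_eq_one_comm.mp hP
  set M := Pᵀ * Z
  have hMt : Mᵀ = Zᵀ * P := by simp [M]
  have hM : Mᵀ * M = 1 := by
    rw [hMt, Matrix.mul_assoc, ← Matrix.mul_assoc P, hPPt, Matrix.one_mul, hZ]
  have hGsymm : (M * Mᵀ).IsSymm := by simp [IsSymm, transpose_mul]
  have hGG := isIdempotentElem_mul_transpose hM
  have hw : ∀ i, (M * Mᵀ) i i = if i ∈ S then 1 else 0 := by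
    refine eq_indicator_of_sum_mul_eq_sum S hS hSc (fun i => (hGsymm.apply_self_mem_Icc hGG i).1)
      (fun i => (hGsymm.apply_self_mem_Icc hGG i).2) ?_ ?_
    · rw [← hcard, ← trace_mul_transpose_of_transpose_mul_eq_one hM]
      rfl
    · rw [← trace_transpose_mul_diagonal_mul, hMt, ← htr]
      simp only [M, Matrix.mul_assoc]
  have hG : M * Mᵀ = diagonal (fun i => if i ∈ S then 1 else 0) := by
    refine (hGsymm.eq_diagonal_diag hGG fun i => ?_).trans (congrArg diagonal (funext hw))
    rw [hw]
    split_ifs <;> norm_num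
  calc Z * Zᵀ = P * (M * Mᵀ) * Pᵀ := by
        simp only [hMt, M, ← Matrix.mul_assoc, hPPt, Matrix.one_mul]
        rw [Matrix.mul_assoc, hPPt, Matrix.mul_one]
    _ = _ := by rw [hG]

lemma eq_mul_transpose_mul_of_mul_transpose_eq [DecidableEq κ] {X Y : Matrix ι κ ℝ}
    (hY : Yᵀ * Y = 1) (h : X * Xᵀ = Y * Yᵀ) : Y = X * (Xᵀ * Y) := by
  rw [← Matrix.mul_assoc, h, Matrix.mul_assoc, hY, Matrix.mul_one]

lemma transpose_mul_transpose_mul_self_eq_one [DecidableEq κ] {X Y : Matrix ι κ ℝ}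
    (hY : Yᵀ * Y = 1) (h : X * Xᵀ = Y * Yᵀ) : (Xᵀ * Y)ᵀ * (Xᵀ * Y) = 1 := by
  rw [transpose_mul, transpose_transpose, Matrix.mul_assoc, ← Matrix.mul_assoc X, h,
    Matrix.mul_assoc, hY, Matrix.mul_one, hY]

section SVD

variable [DecidableEq κ] {U V : Matrix κ κ ℝ} {σ : κ → ℝ}

lemma mul_diagonal_mul_transpose_eq_mul (hV : Vᵀ * V = 1) :
    U * diagonal σ * Vᵀ = (U * Vᵀ) * (V * diagonal σ * Vᵀ) := by
  simp only [Matrix.mul_assoc]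
  rw [← Matrix.mul_assoc Vᵀ V, hV, Matrix.one_mul]

lemma transpose_mul_self_mul_diagonal_mul_transpose (hU : Uᵀ * U = 1) (hV : Vᵀ * V = 1) :
    (U * diagonal σ * Vᵀ)ᵀ * (U * diagonal σ * Vᵀ) =
      (V * diagonal σ * Vᵀ) * (V * diagonal σ * Vᵀ) := by
  simp only [transpose_mul, transpose_transpose, diagonal_transpose, Matrix.mul_assoc]
  rw [← Matrix.mul_assoc Uᵀ U, hU, Matrix.one_mul, ← Matrix.mul_assoc Vᵀ V, hV, Matrix.one_mul]

lemma posSemidef_mul_diagonal_mul_transpose (hσ : ∀ i, 0 ≤ σ i) :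
    (V * diagonal σ * Vᵀ).PosSemidef := by
  simpa [conjTranspose_eq_transpose_of_trivial] using
    (posSemidef_diagonal_iff.mpr hσ).mul_mul_conjTranspose_same V

theorem mul_transpose_eq_of_mul_diagonal_mul_transpose_eq {U' V' : Matrix κ κ ℝ} {σ' : κ → ℝ}
    (hU : Uᵀ * U = 1) (hV : Vᵀ * V = 1) (hU' : U'ᵀ * U' = 1) (hV' : V'ᵀ * V' = 1)
    (hσ : ∀ i, 0 ≤ σ i) (hσ' : ∀ i, 0 ≤ σ' i) (hunit : IsUnit (U * diagonal σ * Vᵀ))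
    (h : U * diagonal σ * Vᵀ = U' * diagonal σ' * V'ᵀ) : U * Vᵀ = U' * V'ᵀ := by
  set H := V * diagonal σ * Vᵀ
  have hH : H = V' * diagonal σ' * V'ᵀ := by
    open scoped MatrixOrder in
    refine (CFC.mul_self_eq_mul_self_iff _ _ (posSemidef_mul_diagonal_mul_transpose hσ).nonneg
      (posSemidef_mul_diagonal_mul_transpose hσ').nonneg).mp ?_
    rw [← transpose_mul_self_mul_diagonal_mul_transpose hU hV, h,
      transpose_mul_self_mul_diagonal_mul_transpose hU' hV']
  have hHunit : IsUnit H :=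
    isUnit_of_mul_isUnit_right (mul_diagonal_mul_transpose_eq_mul hV ▸ hunit)
  rw [← hHunit.mul_left_inj, ← mul_diagonal_mul_transpose_eq_mul hV, h, hH,
    ← mul_diagonal_mul_transpose_eq_mul hV']

theorem mul_mul_transpose_eq_of_eq_mul_orthogonal {X Y D : Matrix ι κ ℝ} {Q U' V' : Matrix κ κ ℝ}
    {σ' : κ → ℝ} (hQ : Qᵀ * Q = 1) (hYQ : Y = X * Q) (hunit : IsUnit (Xᵀ * D))
    (hU : Uᵀ * U = 1) (hV : Vᵀ * V = 1) (hU' : U'ᵀ * U' = 1) (hV' : V'ᵀ * V' = 1)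
    (hσ : ∀ i, 0 ≤ σ i) (hσ' : ∀ i, 0 ≤ σ' i) (hXD : Xᵀ * D = U * diagonal σ * Vᵀ)
    (hYD : Yᵀ * D = U' * diagonal σ' * V'ᵀ) : X * (U * Vᵀ) = Y * (U' * V'ᵀ) := by
  have hXD' : Xᵀ * D = Q * U' * diagonal σ' * V'ᵀ := by
    rw [Matrix.mul_assoc Q, Matrix.mul_assoc Q, ← hYD, hYQ, transpose_mul,
      ← Matrix.mul_assoc, ← Matrix.mul_assoc, mul_eq_one_comm.mp hQ, Matrix.one_mul]
  have hQU' : (Q * U')ᵀ * (Q * U') = 1 := by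
    rw [transpose_mul, Matrix.mul_assoc, ← Matrix.mul_assoc Qᵀ, hQ, Matrix.one_mul, hU']
  rw [mul_transpose_eq_of_mul_diagonal_mul_transpose_eq hU hV hQU' hV' hσ hσ' (hXD ▸ hunit)
    (hXD.symm.trans hXD'), hYQ]
  simp only [Matrix.mul_assoc]

end SVD

end Matrix

/-- Theorem 4.2: under the eigenvalue gap `λ_k(E) > λ_{k+1}(E)`, (i) any two orthonormal
basis matrices of the invariant subspace of `E` associated with its `k` largest eigenvalues
differ by a `k×k` orthogonal factor, and (ii) if moreover `rank(DᵀX̂) = k`, the post-processed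
matrix `X̂UVᵀ` is uniquely determined. -/
theorem stmt14 {n k : ℕ} (hkn : k < n)
    (E : Matrix (Fin n) (Fin n) ℝ)
    -- `μ 0 ≥ μ 1 ≥ ⋯ ≥ μ (n-1)` are the eigenvalues of `E`
    (μ : Fin n → ℝ) (hμ : Antitone μ)
    (P : Matrix (Fin n) (Fin n) ℝ) (hP : Pᵀ * P = 1)
    (hEig : E = P * Matrix.diagonal μ * Pᵀ)
    -- the eigenvalue gap `λ_k − λ_{k+1} > 0`
    (hgap : μ ⟨k, hkn⟩ < μ ⟨k - 1, by omega⟩)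
    (D : Matrix (Fin n) (Fin k) ℝ)
    (Xh Yh : Matrix (Fin n) (Fin k) ℝ) (hXh : Xhᵀ * Xh = 1) (hYh : Yhᵀ * Yh = 1)
    -- `X̂` and `Ŷ` are orthonormal basis matrices of the invariant subspace of `E`
    -- associated with the `k` largest eigenvalues
    (hXtop : trace (Xhᵀ * E * Xh) = ∑ i : Fin k, μ (Fin.castLE hkn.le i))
    (hYtop : trace (Yhᵀ * E * Yh) = ∑ i : Fin k, μ (Fin.castLE hkn.le i)) :
    (∃ Q : Matrix (Fin k) (Fin k) ℝ, Qᵀ * Q = 1 ∧ Yh = Xh * Q)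
      ∧ ((Dᵀ * Xh).rank = k →
          ∀ (U V U' V' : Matrix (Fin k) (Fin k) ℝ) (σ σ' : Fin k → ℝ),
            Uᵀ * U = 1 → Vᵀ * V = 1 → U'ᵀ * U' = 1 → V'ᵀ * V' = 1 →
            Antitone σ → (∀ i, 0 ≤ σ i) → Antitone σ' → (∀ i, 0 ≤ σ' i) →
            Xhᵀ * D = U * Matrix.diagonal σ * Vᵀ →
            Yhᵀ * D = U' * Matrix.diagonal σ' * V'ᵀ →
            Xh * (U * Vᵀ) = Yh * (U' * V'ᵀ)) := by
  obtain ⟨t, hS, hSc⟩ := hμ.exists_separating_Iio hkn hgap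
  have hproj : ∀ Z : Matrix (Fin n) (Fin k) ℝ, Zᵀ * Z = 1 →
      trace (Zᵀ * E * Z) = ∑ i : Fin k, μ (Fin.castLE hkn.le i) →
      Z * Zᵀ = P * diagonal (fun i => if i ∈ Iio ⟨k, hkn⟩ then 1 else 0) * Pᵀ :=
    fun Z hZ htr => mul_transpose_eq_of_trace_eq_sum hP _ hS hSc hZ (by simp)
      (hEig ▸ htr.trans (Fin.sum_univ_castLE_eq_sum_Iio hkn μ))
  have hXY : Xh * Xhᵀ = Yh * Yhᵀ := (hproj Xh hXh hXtop).trans (hproj Yh hYh hYtop).symm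
  have hYQ : Yh = Xh * (Xhᵀ * Yh) := eq_mul_transpose_mul_of_mul_transpose_eq hYh hXY
  have hQ := transpose_mul_transpose_mul_self_eq_one hYh hXY
  refine ⟨⟨_, hQ, hYQ⟩, fun hrank U V U' V' σ σ' hU hV hU' hV' _ hσ _ hσ' hXD hYD => ?_⟩
  have hunit : IsUnit (Xhᵀ * D) := isUnit_of_rank_eq_card (by
    rw [← rank_transpose, transpose_mul, transpose_transpose, hrank, Fintype.card_fin])
  exact mul_mul_transpose_eq_of_eq_mul_orthogonal hQ hYQ hunit hU hV hU' hV' hσ hσ' hXD hYD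
end
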